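/- arXiv:0901.4698 — 3 statements merged into one kernel-verified Lean document; each statement's English description precedes it below -/
import Mathlib

section
/- The q-exponential polynomial φ_n(x) = sum_{k=0}^n S[n,k]·x^k satisfies φ_n(x) = (1-q)^{-n} · sum_{i=0}^n C(n,i)·(-1)^i·r_i((q-1)x), where r_n is the Rogers-Szegő polynomial r_n(x) = sum_{k=0}^n qbinom(n,k)·x^k. -/
open Finset Matrix

/-- The q-integer `[n] = 1 + q + ... + q^(n-1)`. -/
def qint {R : Type*} [CommRing R] (q : R) (n : ℕ) : R := ∑ i ∈ Finset.range n, q ^ i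

/-- The q-factorial `[n]! = [1][2]⋯[n]`. -/
def qfact {R : Type*} [CommRing R] (q : R) (n : ℕ) : R := ∏ i ∈ Finset.range n, qint q (i + 1)

/-- The Gaussian binomial coefficient, via the q-Pascal recurrence. -/
def qbinom {R : Type*} [CommRing R] (q : R) : ℕ → ℕ → R
  | 0, 0 => 1
  | 0, _ + 1 => 0
  | _ + 1, 0 => 1
  | n + 1, k + 1 => qbinom q n k + q ^ (k + 1) * qbinom q n (k + 1)

/-- The q-Stirling numbers of the second kind:
`S[n,k] = S[n-1,k-1] + [k]·S[n-1,k]`, `S[0,k] = δ_{k0}`, `S[n,0] = δ_{n0}`. -/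
def qStirling2 {R : Type*} [CommRing R] (q : R) : ℕ → ℕ → R
  | 0, 0 => 1
  | 0, _ + 1 => 0
  | _ + 1, 0 => 0
  | n + 1, k + 1 => qStirling2 q n k + qint q (k + 1) * qStirling2 q n (k + 1)

/-- The q-Pochhammer symbol `(a;q)_m = ∏_{j<m} (1 - q^j a)`. -/
def qpoch {R : Type*} [CommRing R] (q a : R) (m : ℕ) : R := ∏ j ∈ Finset.range m, (1 - q ^ j * a)

section Aux
variable {R : Type*} [CommRing R]

def rsz (q : R) (n : ℕ) (y : R) : R := ∑ k ∈ Finset.range (n + 1), qbinom q n k * y ^ k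

def phiq (q : R) (n : ℕ) (x : R) : R := ∑ k ∈ Finset.range (n + 1), qStirling2 q n k * x ^ k

def Aq (q : R) (n : ℕ) (y : R) : R :=
  ∑ i ∈ Finset.range (n + 1), (n.choose i : R) * (-1 : R) ^ i * rsz q i y

lemma qbinom_eq_zero (q : R) : ∀ n k : ℕ, n < k → qbinom q n k = 0
  | 0, _ + 1, _ => rfl
  | n + 1, k + 1, h => by
    rw [qbinom, qbinom_eq_zero q n k (by omega), qbinom_eq_zero q n (k + 1) (by omega)]
    ring

lemma qStirling2_eq_zero (q : R) : ∀ n k : ℕ, n < k → qStirling2 q n k = 0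
  | 0, _ + 1, _ => rfl
  | n + 1, k + 1, h => by
    rw [qStirling2, qStirling2_eq_zero q n k (by omega), qStirling2_eq_zero q n (k + 1) (by omega)]
    ring

lemma qbinom_zero (q : R) (n : ℕ) : qbinom q n 0 = 1 := by cases n <;> rfl

lemma qint_mul (q : R) (m : ℕ) : (1 - q) * qint q m = 1 - q ^ m := by
  unfold qint
  induction m with
  | zero => simp
  | succ m ih => rw [Finset.sum_range_succ, mul_add, ih, pow_succ]; ring

lemma rsz_succ (q y : R) (n : ℕ) : rsz q (n + 1) y = y * rsz q n y + rsz q n (q * y) := by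
  unfold rsz
  rw [Finset.sum_range_succ' (fun k => qbinom q (n + 1) k * y ^ k)]
  have h1 : ∀ k ∈ Finset.range (n + 1), qbinom q (n + 1) (k + 1) * y ^ (k + 1) =
      y * (qbinom q n k * y ^ k) + qbinom q n (k + 1) * (q * y) ^ (k + 1) := by
    intro k _
    rw [qbinom, mul_pow]; ring
  rw [Finset.sum_congr rfl h1, Finset.sum_add_distrib, ← Finset.mul_sum]
  have h2 : ∑ k ∈ Finset.range (n + 1), qbinom q n k * (q * y) ^ k =
      (∑ k ∈ Finset.range (n + 1), qbinom q n (k + 1) * (q * y) ^ (k + 1)) + 1 := by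
    rw [Finset.sum_range_succ' (fun k => qbinom q n k * (q * y) ^ k),
      Finset.sum_range_succ (fun k => qbinom q n (k + 1) * (q * y) ^ (k + 1)),
      qbinom_eq_zero q n (n + 1) (by omega), qbinom_zero]
    ring
  rw [h2, qbinom_zero]
  ring

lemma phiq_rec (q x : R) (n : ℕ) :
    (1 - q) * phiq q (n + 1) x = (1 - (q - 1) * x) * phiq q n x - phiq q n (q * x) := by
  have key : ∀ z : R, ∑ k ∈ Finset.range (n + 1), qStirling2 q n (k + 1) * z ^ (k + 1) =
      (∑ k ∈ Finset.range (n + 1), qStirling2 q n k * z ^ k) - qStirling2 q n 0 := by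
    intro z
    rw [Finset.sum_range_succ (fun k => qStirling2 q n (k + 1) * z ^ (k + 1)),
      qStirling2_eq_zero q n (n + 1) (by omega),
      Finset.sum_range_succ' (fun k => qStirling2 q n k * z ^ k)]
    ring
  unfold phiq
  rw [Finset.sum_range_succ' (fun k => qStirling2 q (n + 1) k * x ^ k)]
  have h0 : qStirling2 q (n + 1) 0 = (0 : R) := rfl
  have h1 : ∀ k ∈ Finset.range (n + 1), (1 - q) * (qStirling2 q (n + 1) (k + 1) * x ^ (k + 1)) =
      ((1 - q) * x) * (qStirling2 q n k * x ^ k) +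
        (qStirling2 q n (k + 1) * x ^ (k + 1) - qStirling2 q n (k + 1) * (q * x) ^ (k + 1)) := by
    intro k _
    rw [qStirling2, mul_pow]
    linear_combination (qStirling2 q n (k + 1) * x ^ (k + 1)) * qint_mul q (k + 1)
  rw [h0, mul_add, Finset.mul_sum, Finset.sum_congr rfl h1, Finset.sum_add_distrib,
    Finset.sum_sub_distrib, ← Finset.mul_sum, key x, key (q * x)]
  ring

lemma Aq_succ (q y : R) (n : ℕ) : Aq q (n + 1) y = (1 - y) * Aq q n y - Aq q n (q * y) := by
  unfold Aq
  rw [Finset.sum_range_succ' (fun i => ((n + 1).choose i : R) * (-1 : R) ^ i * rsz q i y)]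
  have hr0 : rsz q 0 y = 1 := by simp [rsz, qbinom]
  have h1 : ∀ j ∈ Finset.range (n + 1),
      (((n + 1).choose (j + 1) : R)) * (-1 : R) ^ (j + 1) * rsz q (j + 1) y =
      (-(y * ((n.choose j : R) * (-1 : R) ^ j * rsz q j y)) +
        -((n.choose j : R) * (-1 : R) ^ j * rsz q j (q * y))) +
        ((n.choose (j + 1) : R) * (-1 : R) ^ (j + 1) * rsz q (j + 1) y) := by
    intro j _
    rw [rsz_succ, Nat.choose_succ_succ]
    push_cast
    ring
  rw [Finset.sum_congr rfl h1, Finset.sum_add_distrib, Finset.sum_add_distrib]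
  have h2 : ∑ j ∈ Finset.range (n + 1), (n.choose (j + 1) : R) * (-1 : R) ^ (j + 1) * rsz q (j + 1) y =
      (∑ i ∈ Finset.range (n + 1), (n.choose i : R) * (-1 : R) ^ i * rsz q i y) - 1 := by
    rw [Finset.sum_range_succ (fun j => (n.choose (j + 1) : R) * (-1 : R) ^ (j + 1) * rsz q (j + 1) y),
      Nat.choose_succ_self, Finset.sum_range_succ' (fun i => (n.choose i : R) * (-1 : R) ^ i * rsz q i y),
      hr0, Nat.choose_zero_right]
    push_cast
    ring
  rw [h2, hr0]
  simp only [Finset.sum_neg_distrib]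
  rw [← Finset.mul_sum, Nat.choose_zero_right]
  push_cast
  ring

end Aux

/-- `φ_n(x) = (1-q)^(-n) ∑_i C(n,i) (-1)^i r_i((q-1)x)`. -/
theorem qexp_eq_rogersSzego_sum {F : Type*} [Field F] (q : F) (hq : q ≠ 1) (x : F) (n : ℕ) :
    ∑ k ∈ Finset.range (n + 1), qStirling2 q n k * x ^ k =
      (1 - q)⁻¹ ^ n * ∑ i ∈ Finset.range (n + 1), (n.choose i : F) * (-1 : F) ^ i *
        (∑ k ∈ Finset.range (i + 1), qbinom q i k * ((q - 1) * x) ^ k) := by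
  induction n generalizing x with
  | zero => simp [qStirling2, qbinom]
  | succ n ih =>
    have h1q : (1 : F) - q ≠ 0 := sub_ne_zero.mpr (Ne.symm hq)
    have i1 : phiq q n x = (1 - q)⁻¹ ^ n * Aq q n ((q - 1) * x) := ih x
    have i2 : phiq q n (q * x) = (1 - q)⁻¹ ^ n * Aq q n ((q - 1) * (q * x)) := ih (q * x)
    show phiq q (n + 1) x = (1 - q)⁻¹ ^ (n + 1) * Aq q (n + 1) ((q - 1) * x)
    have hrec := phiq_rec q x n
    have hp : phiq q (n + 1) x =
        (1 - q)⁻¹ * ((1 - (q - 1) * x) * phiq q n x - phiq q n (q * x)) := by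
      rw [← hrec, inv_mul_cancel_left₀ h1q]
    rw [hp, Aq_succ, i1, i2]
    have e1 : q * ((q - 1) * x) = (q - 1) * (q * x) := by ring
    rw [e1, pow_succ]
    ring
end

section
/- The Hankel determinant of q-Pochhammer symbols satisfies det((x;q)_{i+j})_{i,j=0}^{n-1} = q^{2·C(n,3)} · (1-q)^{C(n,2)} · x^{C(n,2)} · product_{j=0}^{n-1} ([j]! · (x;q)_j). -/
open Finset Matrix

/-!
Since `(x;q)_{i+j} = (x;q)_i (q^i x;q)_j`, the `q`-binomial theorem expands the `(i, j)` entry of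
the Hankel matrix as `(x;q)_i ∑_k (q^i)^k [j choose k]_q (-1)^k q^{C(k,2)} x^k`. This factors the
matrix as `diag((x;q)_i) · V · U`, with `V` the Vandermonde matrix of `1, q, …, q^{n-1}` and `U`
upper triangular with diagonal `(-1)^k q^{C(k,2)} x^k`. Each factor has an explicit determinant:
`det V = ∏_{i<j} (q^j - q^i) = (q-1)^{C(n,2)} q^{C(n,3)} ∏_j [j]!`, and the signs of `det V` and
`det U` combine to `(1-q)^{C(n,2)}`.
-/
theorem sum_range_choose_eq_choose_succ (n k : ℕ) :
    ∑ i ∈ range n, i.choose k = n.choose (k + 1) := by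
  induction n with
  | zero => simp
  | succ n ih => rw [sum_range_succ, ih, Nat.choose_succ_succ', add_comm]

theorem prod_range_pow_choose {M : Type*} [CommMonoid M] (a : M) (n k : ℕ) :
    ∏ i ∈ range n, a ^ i.choose k = a ^ n.choose (k + 1) := by
  rw [prod_pow_eq_pow_sum, sum_range_choose_eq_choose_succ]

theorem prod_range_pow {M : Type*} [CommMonoid M] (a : M) (n : ℕ) :
    ∏ i ∈ range n, a ^ i = a ^ n.choose 2 := by
  simpa only [Nat.choose_one_right] using prod_range_pow_choose a n 1

theorem det_vandermonde_eq_prod_range {R : Type*} [CommRing R] (v : ℕ → R) (n : ℕ) :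
    (vandermonde fun i : Fin n => v i).det = ∏ j ∈ range n, ∏ i ∈ range j, (v j - v i) := by
  rw [det_vandermonde, prod_comm' (t' := univ) (s' := Iio) (by simp),
    ← Fin.prod_univ_eq_prod_range (fun j => ∏ i ∈ range j, (v j - v i))]
  refine prod_congr rfl fun j _ => ?_
  rw [← Nat.Iio_eq_range, ← Fin.map_valEmbedding_Iio, prod_map]
  rfl

section QAnalogues

variable {R : Type*} [CommRing R] (q : R)

theorem qbinom_zero_right : ∀ m : ℕ, qbinom q m 0 = 1
  | 0 => rfl
  | _ + 1 => rfl

theorem qbinom_succ_succ (m k : ℕ) :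
    qbinom q (m + 1) (k + 1) = qbinom q m k + q ^ (k + 1) * qbinom q m (k + 1) := rfl

theorem qbinom_eq_zero_of_lt : ∀ {m k : ℕ}, m < k → qbinom q m k = 0
  | 0, _ + 1, _ => rfl
  | m + 1, k + 1, h => by
    rw [qbinom_succ_succ, qbinom_eq_zero_of_lt (by omega), qbinom_eq_zero_of_lt (by omega),
      mul_zero, add_zero]

theorem qbinom_self : ∀ m : ℕ, qbinom q m m = 1
  | 0 => rfl
  | m + 1 => by
    rw [qbinom_succ_succ, qbinom_self m, qbinom_eq_zero_of_lt q m.lt_succ_self, mul_zero, add_zero]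

theorem qpoch_succ' (a : R) (m : ℕ) : qpoch q a (m + 1) = (1 - a) * qpoch q (q * a) m := by
  simp only [qpoch, prod_range_succ', pow_succ', mul_assoc, mul_left_comm q, pow_zero, one_mul,
    mul_comm (1 - a)]

theorem qpoch_add (a : R) (i j : ℕ) :
    qpoch q a (i + j) = qpoch q a i * qpoch q (q ^ i * a) j := by
  simp only [qpoch, prod_range_add, pow_add, mul_comm (q ^ i), mul_assoc]

/-- The `q`-binomial theorem; the sum may run past `m` because `qbinom q m k = 0` for `k > m`. -/
theorem qpoch_eq_sum_qbinom (m N : ℕ) (hmN : m < N) (a : R) :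
    qpoch q a m = ∑ k ∈ range N, qbinom q m k * ((-1) ^ k * q ^ k.choose 2 * a ^ k) := by
  induction m generalizing N a with
  | zero =>
    obtain ⟨N, rfl⟩ : ∃ N', N = N' + 1 := ⟨N - 1, by omega⟩
    simp [sum_range_succ', qpoch, qbinom]
  | succ m ih =>
    obtain ⟨N, rfl⟩ : ∃ N', N = N' + 1 := ⟨N - 1, by omega⟩
    have hterm : ∀ k : ℕ,
        qbinom q (m + 1) (k + 1) * ((-1) ^ (k + 1) * q ^ (k + 1).choose 2 * a ^ (k + 1)) =
          qbinom q m (k + 1) * ((-1) ^ (k + 1) * q ^ (k + 1).choose 2 * (q * a) ^ (k + 1)) -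
            a * (qbinom q m k * ((-1) ^ k * q ^ k.choose 2 * (q * a) ^ k)) := by
      intro k
      rw [qbinom_succ_succ, Nat.choose_succ_succ' k 1, Nat.choose_one_right]
      ring
    rw [qpoch_succ', sub_mul, one_mul]
    nth_rw 1 [ih (N + 1) (by omega)]
    rw [ih N (by omega), mul_sum, sum_range_succ' _ N, sum_range_succ' _ N, qbinom_zero_right,
      qbinom_zero_right]
    simp only [hterm, sum_sub_distrib]
    ring

theorem prod_range_pow_sub_pow (j : ℕ) :
    ∏ i ∈ range j, (q ^ j - q ^ i) = (q - 1) ^ j * q ^ j.choose 2 * qfact q j := by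
  have hfactor : ∀ i ∈ range j, q ^ j - q ^ i = (q - 1) * q ^ i * qint q (j - 1 - i + 1) := by
    intro i hi
    have hj : q ^ j = q ^ i * q ^ (j - 1 - i + 1) := by
      rw [← pow_add]
      congr 1
      have := mem_range.mp hi
      omega
    rw [hj, qint]
    linear_combination -q ^ i * geom_sum_mul q (j - 1 - i + 1)
  rw [prod_congr rfl hfactor, prod_mul_distrib, prod_mul_distrib, prod_const, card_range,
    prod_range_pow, prod_range_reflect (fun i => qint q (i + 1)), qfact]

theorem det_vandermonde_pow (n : ℕ) :
    (vandermonde fun i : Fin n => q ^ (i : ℕ)).det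
      = (q - 1) ^ n.choose 2 * q ^ n.choose 3 * ∏ j ∈ range n, qfact q j := by
  rw [det_vandermonde_eq_prod_range (q ^ ·), prod_congr rfl fun j _ => prod_range_pow_sub_pow q j,
    prod_mul_distrib, prod_mul_distrib, prod_range_pow, prod_range_pow_choose]

end QAnalogues

section Hankel

variable {R : Type*} [CommRing R] (q x : R) (n : ℕ)

/-- Column `j` lists the coefficients of `(x y; q)_j` as a polynomial in `y`. -/
def qpochCoeffMatrix : Matrix (Fin n) (Fin n) R :=
  of fun k j => qbinom q j k * ((-1) ^ (k : ℕ) * q ^ (k : ℕ).choose 2 * x ^ (k : ℕ))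

theorem det_qpochCoeffMatrix :
    (qpochCoeffMatrix q x n).det = (-1) ^ n.choose 2 * q ^ n.choose 3 * x ^ n.choose 2 := by
  have hupper : (qpochCoeffMatrix q x n).IsUpperTriangular := fun k j hjk => by
    rw [qpochCoeffMatrix, of_apply, qbinom_eq_zero_of_lt q (show (j : ℕ) < k from hjk), zero_mul]
  rw [det_of_isUpperTriangular hupper]
  simp only [qpochCoeffMatrix, of_apply, qbinom_self, one_mul]
  rw [Fin.prod_univ_eq_prod_range (fun k => (-1) ^ k * q ^ k.choose 2 * x ^ k), prod_mul_distrib,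
    prod_mul_distrib, prod_range_pow, prod_range_pow, prod_range_pow_choose]

theorem hankel_qpoch_eq_mul :
    (of fun i j : Fin n => qpoch q x ((i : ℕ) + (j : ℕ))) =
      diagonal (fun i : Fin n => qpoch q x i) * vandermonde (fun i : Fin n => q ^ (i : ℕ)) *
        qpochCoeffMatrix q x n := by
  ext i j
  rw [of_apply, mul_apply, qpoch_add, qpoch_eq_sum_qbinom q j n j.isLt, mul_sum,
    ← Fin.sum_univ_eq_sum_range]
  refine sum_congr rfl fun k _ => ?_
  rw [diagonal_mul, vandermonde_apply, qpochCoeffMatrix, of_apply, mul_pow, ← pow_mul]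
  ring

end Hankel

/-- Hankel determinant of the q-Pochhammer symbols `(x;q)_m`. -/
theorem hankel_det_qpoch {R : Type*} [CommRing R] (q x : R) (n : ℕ) :
    (Matrix.of fun i j : Fin n => qpoch q x ((i : ℕ) + (j : ℕ))).det =
      q ^ (2 * n.choose 3) * (1 - q) ^ n.choose 2 * x ^ n.choose 2 *
        ∏ j ∈ Finset.range n, qfact q j * qpoch q x j := by
  rw [hankel_qpoch_eq_mul, det_mul, det_mul, det_diagonal, det_vandermonde_pow,
    det_qpochCoeffMatrix, Fin.prod_univ_eq_prod_range (qpoch q x), prod_mul_distrib,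
    show 1 - q = (q - 1) * (-1) by ring, mul_pow]
  ring
end

section
/- det([i+j]!)_{i,j=0}^{n-1} = q^{n(n-1)(2n-1)/6} · (product_{j=0}^{n-1} [j]!)^2, where [m]! is the q-factorial. -/
open Finset Matrix

section AuxLemmas

variable {R : Type*} [CommRing R] (q : R)

lemma my_qint_add (a b : ℕ) : qint q (a + b) = qint q a + q ^ a * qint q b := by
  simp [qint, Finset.sum_range_add, Finset.mul_sum, pow_add]

lemma my_qfact_succ (n : ℕ) : qfact q (n + 1) = qfact q n * qint q (n + 1) :=
  Finset.prod_range_succ _ n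

lemma my_qbinom_zero (n : ℕ) : qbinom q n 0 = 1 := by cases n <;> rfl

lemma my_qbinom_succ (n k : ℕ) :
    qbinom q (n + 1) (k + 1) = qbinom q n k + q ^ (k + 1) * qbinom q n (k + 1) := rfl

lemma my_qbinom_eq_zero : ∀ {n k : ℕ}, n < k → qbinom q n k = 0
  | 0, _ + 1, _ => rfl
  | n + 1, k + 1, h => by
    rw [my_qbinom_succ, my_qbinom_eq_zero (show n < k by omega),
      my_qbinom_eq_zero (show n < k + 1 by omega)]
    ring

lemma my_qbinom_self : ∀ n : ℕ, qbinom q n n = 1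
  | 0 => rfl
  | n + 1 => by
    rw [my_qbinom_succ, my_qbinom_self n, my_qbinom_eq_zero q (show n < n + 1 by omega)]
    ring

lemma my_qbinom_one : ∀ n : ℕ, qbinom q n 1 = qint q n
  | 0 => by
    rw [show (qbinom q 0 1 : R) = 0 from rfl]; simp [qint]
  | n + 1 => by
    rw [show (1 : ℕ) = 0 + 1 from rfl, my_qbinom_succ q n 0, my_qbinom_zero q n]
    rw [show (0 : ℕ) + 1 = 1 from rfl, my_qbinom_one n]
    simp only [qint, geom_sum_succ, pow_one]
    ring

/-- The second q-Pascal recurrence. -/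
lemma my_qbinom_succ' : ∀ n k : ℕ,
    qbinom q (n + 1) (k + 1) = q ^ (n - k) * qbinom q n k + qbinom q n (k + 1)
  | n, 0 => by
    simp only [Nat.zero_add, Nat.sub_zero]
    rw [my_qbinom_one q (n + 1), my_qbinom_one q n, my_qbinom_zero q n,
      my_qint_add q n 1]
    simp [qint]; ring
  | 0, k + 1 => by
    rw [my_qbinom_eq_zero q (show 0 + 1 < k + 1 + 1 by omega),
      my_qbinom_eq_zero q (show 0 < k + 1 by omega),
      my_qbinom_eq_zero q (show 0 < k + 1 + 1 by omega)]
    ring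
  | n + 1, k + 1 => by
    rcases le_or_gt (k + 1) n with h | h
    · conv_lhs => rw [my_qbinom_succ q (n + 1) (k + 1), my_qbinom_succ' n k,
        my_qbinom_succ' n (k + 1)]
      conv_rhs => rw [my_qbinom_succ q n k, my_qbinom_succ q n (k + 1)]
      have hp : q ^ (k + 1 + 1) * q ^ (n - (k + 1)) = q ^ (n - k) * q ^ (k + 1) := by
        rw [← pow_add, ← pow_add]; congr 1; omega
      rw [show n + 1 - (k + 1) = n - k from by omega]
      linear_combination qbinom q n (k + 1) * hp
    · rcases Nat.eq_or_lt_of_le (show n ≤ k by omega) with rfl | h3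
      · rw [my_qbinom_self q (n + 1 + 1), my_qbinom_self q (n + 1),
          my_qbinom_eq_zero q (show n + 1 < n + 1 + 1 by omega)]
        simp
      · rw [my_qbinom_eq_zero q (show n + 1 + 1 < k + 1 + 1 by omega),
          my_qbinom_eq_zero q (show n + 1 < k + 1 by omega),
          my_qbinom_eq_zero q (show n + 1 < k + 1 + 1 by omega)]
        ring

/-- `[k]! [n-k]! C(n,k) = [n]!` -/
lemma my_qbinom_fact : ∀ n k : ℕ, k ≤ n →
    qfact q k * qfact q (n - k) * qbinom q n k = qfact q n
  | 0, 0, _ => by norm_num [qfact]; rw [show (qbinom q 0 0 : R) = 1 from rfl]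
  | n + 1, 0, _ => by simp [my_qbinom_zero, qfact]
  | n + 1, k + 1, h => by
    rcases Nat.eq_or_lt_of_le h with he | hlt
    · have hk : k = n := by omega
      subst hk
      rw [my_qbinom_self, Nat.sub_self]
      simp [qfact]
    · have hk : k + 1 ≤ n := by omega
      obtain ⟨m, hm⟩ : ∃ m, n - k = m + 1 := ⟨n - k - 1, by omega⟩
      have hm2 : n + 1 - (k + 1) = m + 1 := by omega
      have hm3 : n - (k + 1) = m := by omega
      rw [my_qbinom_succ, hm2, mul_add]
      have e1 : qfact q (k + 1) * qfact q (m + 1) * qbinom q n k =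
          qint q (k + 1) * qfact q n := by
        rw [my_qfact_succ q k]
        calc qfact q k * qint q (k+1) * qfact q (m+1) * qbinom q n k
            = qint q (k+1) * (qfact q k * qfact q (n - k) * qbinom q n k) := by
              rw [hm]; ring
          _ = qint q (k+1) * qfact q n := by rw [my_qbinom_fact n k (by omega)]
      have e2 : qfact q (k + 1) * qfact q (m + 1) * (q ^ (k + 1) * qbinom q n (k + 1)) =
          q ^ (k + 1) * qint q (m + 1) * qfact q n := by
        rw [my_qfact_succ q m]
        calc qfact q (k+1) * (qfact q m * qint q (m+1)) * (q ^ (k+1) * qbinom q n (k+1))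
            = q ^ (k+1) * qint q (m+1) *
              (qfact q (k+1) * qfact q (n - (k+1)) * qbinom q n (k+1)) := by rw [hm3]; ring
          _ = q ^ (k+1) * qint q (m+1) * qfact q n := by
              rw [my_qbinom_fact n (k+1) hk]
      rw [e1, e2, my_qfact_succ q n]
      have : qint q (n + 1) = qint q (k + 1) + q ^ (k + 1) * qint q (m + 1) := by
        rw [← my_qint_add, show k + 1 + (m + 1) = n + 1 from by omega]
      rw [this]; ring

/-- auxiliary W identity -/
lemma my_qbinom_w (i : ℕ)
    (hV : ∀ j, (∑ k ∈ range (i + 1), q ^ (k * k) * qbinom q i k * qbinom q j k)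
      = qbinom q (i + j) i) :
    ∀ j, (∑ k ∈ range (i + 1), q ^ (k * k + k) * qbinom q i k * qbinom q j (k + 1))
      = qbinom q (i + j) (i + 1)
  | 0 => by
    rw [Finset.sum_eq_zero, my_qbinom_eq_zero q (show i + 0 < i + 1 by omega)]
    intro k _
    rw [show (qbinom q 0 (k + 1) : R) = 0 from rfl]
    ring
  | j + 1 => by
    have step : ∀ k ∈ range (i + 1),
        q ^ (k * k + k) * qbinom q i k * qbinom q (j + 1) (k + 1)
        = q ^ j * (q ^ (k * k) * qbinom q i k * qbinom q j k)
          + q ^ (k * k + k) * qbinom q i k * qbinom q j (k + 1) := by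
      intro k _
      rcases le_or_gt k j with h | h
      · rw [my_qbinom_succ' q j k]
        have hp : q ^ (k * k + k) * q ^ (j - k) = q ^ j * q ^ (k * k) := by
          rw [← pow_add, ← pow_add]; congr 1; omega
        linear_combination qbinom q i k * qbinom q j k * hp
      · rw [my_qbinom_eq_zero q (show j < k by omega),
          my_qbinom_eq_zero q (show j + 1 < k + 1 by omega),
          my_qbinom_eq_zero q (show j < k + 1 by omega)]
        ring
    rw [Finset.sum_congr rfl step, Finset.sum_add_distrib, ← Finset.mul_sum,
      hV j, my_qbinom_w i hV j,
      show i + (j + 1) = (i + j) + 1 from by omega,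
      my_qbinom_succ' q (i + j) i,
      show i + j - i = j from by omega]

/-- q-Vandermonde: `∑ q^{k²} C(i,k) C(j,k) = C(i+j, i)`. -/
lemma my_qbinom_vandermonde : ∀ i j : ℕ,
    (∑ k ∈ range (i + 1), q ^ (k * k) * qbinom q i k * qbinom q j k) = qbinom q (i + j) i
  | 0, j => by
    rw [Finset.sum_range_one, my_qbinom_zero q j, Nat.zero_add, my_qbinom_zero q j,
      show (qbinom q 0 0 : R) = 1 from rfl]
    ring
  | i + 1, j => by
    have hV := fun j => my_qbinom_vandermonde i j
    have hW := my_qbinom_w q i hV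
    rw [Finset.sum_range_succ']
    have step : ∀ k ∈ range (i + 1),
        q ^ ((k+1) * (k+1)) * qbinom q (i+1) (k+1) * qbinom q j (k+1)
        = q ^ (i+1) * (q ^ (k*k+k) * qbinom q i k * qbinom q j (k+1))
          + q ^ ((k+1)*(k+1)) * qbinom q i (k+1) * qbinom q j (k+1) := by
      intro k hk
      simp only [Finset.mem_range] at hk
      rw [my_qbinom_succ' q i k]
      have hp : q ^ ((k+1) * (k+1)) * q ^ (i - k) = q ^ (i+1) * q ^ (k*k+k) := by
        rw [← pow_add, ← pow_add]; congr 1; ring_nf; omega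
      linear_combination qbinom q i k * qbinom q j (k + 1) * hp
    rw [Finset.sum_congr rfl step, Finset.sum_add_distrib, ← Finset.mul_sum, hW j]
    have e0 : q ^ (0 * 0) * qbinom q (i+1) 0 * qbinom q j 0
        = q ^ (0 * 0) * qbinom q i 0 * qbinom q j 0 := by
      rw [my_qbinom_zero q (i+1), my_qbinom_zero q i]
    rw [e0, add_assoc,
      ← Finset.sum_range_succ' (fun k => q ^ (k*k) * qbinom q i k * qbinom q j k) (i+1),
      Finset.sum_range_succ, my_qbinom_eq_zero q (show i < i + 1 by omega), hV j]
    rw [show i + 1 + j = (i + j) + 1 from by omega, my_qbinom_succ]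
    ring

lemma my_six_sum_sq : ∀ n : ℕ, 6 * (∑ k ∈ range n, k * k) = n * (n - 1) * (2 * n - 1)
  | 0 => rfl
  | n + 1 => by
    rw [Finset.sum_range_succ, Nat.mul_add, my_six_sum_sq n]
    cases n with
    | zero => rfl
    | succ m =>
      simp only [Nat.add_sub_cancel]
      rw [show 2 * (m + 1) - 1 = 2 * m + 1 from by omega,
        show 2 * (m + 1 + 1) - 1 = 2 * m + 3 from by omega]
      ring


end AuxLemmas

/-- `det([i+j]!) = q^(n(n-1)(2n-1)/6) (∏_j [j]!)^2`. -/
theorem hankel_det_qfact {R : Type*} [CommRing R] (q : R) (n : ℕ) :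
    (Matrix.of fun i j : Fin n => qfact q ((i : ℕ) + (j : ℕ))).det =
      q ^ (n * (n - 1) * (2 * n - 1) / 6) * (∏ j ∈ Finset.range n, qfact q j) ^ 2 := by
  classical
  set L : Matrix (Fin n) (Fin n) R :=
    Matrix.of fun i k : Fin n => qfact q (i : ℕ) * qbinom q (i : ℕ) (k : ℕ) with hL
  set D : Matrix (Fin n) (Fin n) R :=
    Matrix.diagonal (fun k : Fin n => q ^ ((k : ℕ) * (k : ℕ))) with hD
  have hA : (Matrix.of fun i j : Fin n => qfact q ((i : ℕ) + (j : ℕ))) = L * D * Lᵀ := by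
    have hLD : L * D = Matrix.of
        (fun i k : Fin n => qfact q (i : ℕ) * qbinom q (i : ℕ) (k : ℕ) * q ^ ((k:ℕ) * (k:ℕ))) := by
      ext a b
      rw [hL, hD, Matrix.mul_diagonal]
      rfl
    ext i j
    rw [Matrix.mul_assoc, ← Matrix.mul_assoc, hLD]
    simp only [Matrix.mul_apply, Matrix.transpose_apply, hL, Matrix.of_apply]
    rw [Fin.sum_univ_eq_sum_range
      (fun k => qfact q (i:ℕ) * qbinom q (i:ℕ) k * q ^ (k*k) * (qfact q (j:ℕ) * qbinom q (j:ℕ) k)) n]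
    rw [← Finset.sum_subset (Finset.range_subset_range.2 (show (i:ℕ) + 1 ≤ n from i.isLt))
      (fun k _ hk => by
        rw [my_qbinom_eq_zero q (show (i:ℕ) < k from by
          simp only [Finset.mem_range] at hk ⊢; omega)]
        ring)]
    have : ∀ k ∈ range ((i:ℕ) + 1),
        qfact q (i:ℕ) * qbinom q (i:ℕ) k * q ^ (k*k) * (qfact q (j:ℕ) * qbinom q (j:ℕ) k)
        = qfact q (i:ℕ) * qfact q (j:ℕ) * (q ^ (k*k) * qbinom q (i:ℕ) k * qbinom q (j:ℕ) k) := by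
      intro k _; ring
    rw [Finset.sum_congr rfl this, ← Finset.mul_sum, my_qbinom_vandermonde q (i:ℕ) (j:ℕ)]
    rw [← my_qbinom_fact q ((i:ℕ) + (j:ℕ)) (i:ℕ) (by omega),
      show (i:ℕ) + (j:ℕ) - (i:ℕ) = (j:ℕ) from by omega]
  rw [hA, Matrix.det_mul, Matrix.det_mul, Matrix.det_transpose]
  have hLtri : L.BlockTriangular OrderDual.toDual := by
    intro i j hij
    simp only [OrderDual.toDual_lt_toDual] at hij
    simp only [hL, Matrix.of_apply]
    rw [my_qbinom_eq_zero q (show (i:ℕ) < (j:ℕ) from hij)]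
    ring
  have hdetL : L.det = ∏ j ∈ Finset.range n, qfact q j := by
    rw [Matrix.det_of_lowerTriangular L hLtri]
    rw [show (∏ i : Fin n, L i i) = ∏ i : Fin n, qfact q (i:ℕ) from
      Finset.prod_congr rfl fun i _ => by
        simp only [hL, Matrix.of_apply, my_qbinom_self q (i:ℕ)]; ring]
    exact Fin.prod_univ_eq_prod_range (fun i => qfact q i) n
  have hdetD : D.det = q ^ (n * (n - 1) * (2 * n - 1) / 6) := by
    rw [hD, Matrix.det_diagonal, Finset.prod_pow_eq_pow_sum]
    congr 1
    rw [Fin.sum_univ_eq_sum_range (fun k => k * k) n]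
    have h6 := my_six_sum_sq n
    omega
  rw [hdetL, hdetD]
  ring
end
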